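/- arXiv:2306.16812 — 2 statements merged into one kernel-verified Lean document; each statement's English description precedes it below -/
import Mathlib

section
/- Let q ≡ 1 (mod 4) be a prime power. Then there exists a Hadamard matrix of order 2(q + 1) (Paley's second construction). -/
/-!
If `C` is a symmetric conference matrix of order `m` (zero diagonal, `±1` elsewhere,
`C * C = (m - 1) • 1`) and `A`, `B` are symmetric `±1` matrices of order 2 with
`A * A = B * B = 2 • 1` and `A * B = -(B * A)`, then `H = C ⊗ A + 1 ⊗ B` is symmetric with
`H * H = (C * C) ⊗ (A * A) + C ⊗ (A * B + B * A) + 1 ⊗ (B * B) = 2m • 1`, and its entries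
are `±1` because `C` and `1` have disjoint supports.

For `q ≡ 1 (mod 4)` such a `C` of order `q + 1` is the quadratic-residue matrix `χ (a - b)` of
`GF(q)`, bordered by ones: it is symmetric because `-1` is a square, and distinct rows are
orthogonal because `∑ x, χ (a - x) * χ (b - x) = -1` for `a ≠ b`, which is `χ (-1)` times the
Jacobi sum `J(χ, χ) = -χ (-1)`.
-/

open Matrix Kronecker

namespace Matrix

variable {n R : Type*} [DecidableEq n] [CommRing R]

-- Each entry `0` of `C` becomes the block `B = !![1, -1; -1, -1]`, each `±1` becomes `±A`.
def paleyDouble (C : Matrix n n R) : Matrix (n × Fin 2) (n × Fin 2) R :=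
  C ⊗ₖ !![1, 1; 1, -1] + 1 ⊗ₖ !![1, -1; -1, -1]

lemma paleyDouble_transpose {C : Matrix n n R} (hsymm : Cᵀ = C) :
    C.paleyDoubleᵀ = C.paleyDouble := by
  rw [paleyDouble, transpose_add, ← kroneckerMap_transpose, ← kroneckerMap_transpose, hsymm,
    transpose_one]
  congr 2 <;> ext i j <;> fin_cases i <;> fin_cases j <;> rfl

variable [Fintype n]

structure IsConference (C : Matrix n n R) : Prop where
  apply_self (i : n) : C i i = 0
  apply_eq_one_or_eq_neg_one {i j : n} : i ≠ j → C i j = 1 ∨ C i j = -1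
  mul_transpose : C * Cᵀ = ((Fintype.card n : R) - 1) • 1

lemma paleyDouble_apply_eq_one_or_eq_neg_one {C : Matrix n n R} (hC : C.IsConference)
    (i j : n × Fin 2) : C.paleyDouble i j = 1 ∨ C.paleyDouble i j = -1 := by
  obtain ⟨i, s⟩ := i
  obtain ⟨j, t⟩ := j
  simp only [paleyDouble, add_apply, kroneckerMap_apply, one_apply]
  by_cases hij : i = j
  · subst hij
    fin_cases s <;> fin_cases t <;> simp [hC.apply_self]
  · rcases hC.apply_eq_one_or_eq_neg_one hij with h | h <;>
      fin_cases s <;> fin_cases t <;> simp [h, hij]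

lemma paleyDouble_mul_self {C : Matrix n n R} (hC : C.IsConference) (hsymm : Cᵀ = C) :
    C.paleyDouble * C.paleyDouble = (Fintype.card (n × Fin 2) : R) • 1 := by
  set A : Matrix (Fin 2) (Fin 2) R := !![1, 1; 1, -1]
  set B : Matrix (Fin 2) (Fin 2) R := !![1, -1; -1, -1]
  have hAA : A * A = (2 : R) • 1 := by
    ext i j; fin_cases i <;> fin_cases j <;> simp [A, mul_apply] <;> norm_num
  have hBB : B * B = (2 : R) • 1 := by
    ext i j; fin_cases i <;> fin_cases j <;> simp [B, mul_apply] <;> norm_num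
  have hAB : A * B + B * A = 0 := by
    ext i j; fin_cases i <;> fin_cases j <;> simp [A, B]
  have hCC : C * C = ((Fintype.card n : R) - 1) • 1 := by
    simpa only [hsymm] using hC.mul_transpose
  calc C.paleyDouble * C.paleyDouble
      = (C * C) ⊗ₖ (A * A) + C ⊗ₖ (A * B + B * A) + 1 ⊗ₖ (B * B) := by
        simp only [paleyDouble, add_mul, mul_add, ← mul_kronecker_mul, kronecker_add,
          Matrix.one_mul, Matrix.mul_one]
        abel
    _ = (Fintype.card (n × Fin 2) : R) • 1 := by
        rw [hCC, hAA, hAB, hBB, kronecker_zero, add_zero]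
        simp only [smul_kronecker, kronecker_smul, one_kronecker_one, smul_smul, ← add_smul,
          Fintype.card_prod, Fintype.card_fin]
        push_cast
        ring_nf

theorem IsConference.isHadamard_paleyDouble [StarRing R] [TrivialStar R] {C : Matrix n n R}
    (hC : C.IsConference) (hsymm : Cᵀ = C) : C.paleyDouble.IsHadamard := by
  have hmul : C.paleyDouble * C.paleyDoubleᴴ = (Fintype.card (n × Fin 2) : R) • 1 := by
    rw [conjTranspose_eq_transpose_of_trivial, paleyDouble_transpose hsymm,
      paleyDouble_mul_self hC hsymm]
  refine ⟨fun i j => ?_, hmul, ?_⟩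
  · rcases paleyDouble_apply_eq_one_or_eq_neg_one hC i j with h | h <;>
      simp [h, Unitary.mem_iff]
  · rwa [conjTranspose_eq_transpose_of_trivial, paleyDouble_transpose hsymm] at hmul ⊢

end Matrix

variable {F : Type*} [Field F] [Fintype F] [DecidableEq F]

lemma quadraticChar_sum_sub (hF : ringChar F ≠ 2) (c : F) :
    ∑ x, quadraticChar F (c - x) = 0 :=
  (Fintype.sum_equiv (Equiv.subLeft c) _ _ fun _ => rfl).trans (quadraticChar_sum_zero hF)

lemma quadraticChar_sum_sub_sq (c : F) :
    ∑ x, quadraticChar F (c - x) ^ 2 = Fintype.card F - 1 := by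
  have hsq (y : F) : quadraticChar F y ^ 2 = 1 - if y = 0 then 1 else 0 := by
    by_cases hy : y = 0
    · simp [hy]
    · simp [hy, quadraticChar_sq_one hy, -quadraticChar_apply]
  rw [Fintype.sum_equiv (Equiv.subLeft c) (fun x => quadraticChar F (c - x) ^ 2)
    (fun y => quadraticChar F y ^ 2) fun _ => rfl]
  simp only [hsq, Finset.sum_sub_distrib, Finset.sum_ite_eq', Finset.mem_univ, if_true,
    Finset.sum_const, Finset.card_univ, nsmul_eq_mul, mul_one]

lemma quadraticChar_sum_sub_mul_sub (hF : ringChar F ≠ 2) {a b : F} (hab : a ≠ b) :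
    ∑ x, quadraticChar F (a - x) * quadraticChar F (b - x) = -1 := by
  set χ := quadraticChar F
  have hd : a - b ≠ 0 := sub_ne_zero.mpr hab
  have hJ : jacobiSum χ χ = -χ (-1) := by
    have h := jacobiSum_nontrivial_inv (quadraticChar_ne_one hF)
    rwa [(quadraticChar_isQuadratic F).inv] at h
  let e : F ≃ F := (Equiv.mulLeft₀ (a - b) hd).trans (Equiv.subLeft a)
  calc ∑ x, χ (a - x) * χ (b - x) = ∑ y, χ (a - e y) * χ (b - e y) :=
        (Fintype.sum_equiv e _ _ fun _ => rfl).symm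
    _ = ∑ y, χ (-1) * (χ y * χ (1 - y)) := by
        refine Finset.sum_congr rfl fun y _ => ?_
        have h1 : a - e y = (a - b) * y := by simp [e]
        have h2 : b - e y = (-1) * ((a - b) * (1 - y)) := by simp [e]; ring
        rw [h1, h2, map_mul, map_mul, map_mul]
        linear_combination (χ (-1) * χ y * χ (1 - y)) * quadraticChar_sq_one hd
    _ = -1 := by
        rw [← Finset.mul_sum, ← jacobiSum, hJ, mul_neg, ← sq,
          quadraticChar_sq_one (neg_ne_zero.mpr one_ne_zero)]

variable (F) in
def paleyConference (R : Type*) [CommRing R] : Matrix (Option F) (Option F) R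
  | none, none => 0
  | none, some _ => 1
  | some _, none => 1
  | some a, some b => quadraticChar F (a - b)

variable {R : Type*} [CommRing R]

lemma paleyConference_transpose (h : IsSquare (-1 : F)) :
    (paleyConference F R)ᵀ = paleyConference F R := by
  have hχ : quadraticChar F (-1) = 1 :=
    (quadraticChar_one_iff_isSquare (neg_ne_zero.mpr one_ne_zero)).mpr h
  ext (_ | a) (_ | b)
  · rfl
  · rfl
  · rfl
  · simp only [transpose_apply, paleyConference]
    rw [← neg_sub, neg_eq_neg_one_mul, map_mul, hχ, one_mul]

lemma isConference_paleyConference (hF : ringChar F ≠ 2) :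
    (paleyConference F R).IsConference where
  apply_self i := by cases i <;> simp [paleyConference]
  apply_eq_one_or_eq_neg_one {i j} hij := by
    rcases i with _ | a <;> rcases j with _ | b
    · exact absurd rfl hij
    all_goals simp only [paleyConference, true_or]
    have hab : a - b ≠ 0 := sub_ne_zero.mpr fun h => hij (congrArg some h)
    rcases quadraticChar_dichotomy hab with h | h <;> simp [h]
  mul_transpose := by
    have hsum (c : F) : ∑ x, (quadraticChar F (c - x) : R) = 0 := by
      exact_mod_cast congrArg (Int.cast : ℤ → R) (quadraticChar_sum_sub hF c)
    ext (_ | a) (_ | b)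
    · simp [mul_apply, paleyConference]
    · simp [mul_apply, paleyConference, -quadraticChar_apply, hsum]
    · simp [mul_apply, paleyConference, -quadraticChar_apply, hsum]
    · by_cases hab : a = b
      · subst hab
        have := congrArg (Int.cast : ℤ → R) (quadraticChar_sum_sub_sq (F := F) a)
        push_cast at this
        simp [mul_apply, paleyConference, -quadraticChar_apply, ← sq, this]
      · have := congrArg (Int.cast : ℤ → R) (quadraticChar_sum_sub_mul_sub hF hab)
        push_cast at this
        simp [mul_apply, paleyConference, -quadraticChar_apply, this, hab]

theorem paley_II (q : ℕ) (hq : ∃ p k : ℕ, p.Prime ∧ 0 < k ∧ q = p ^ k)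
    (h4 : q % 4 = 1) :
    ∃ H : Matrix (Fin (2 * (q + 1))) (Fin (2 * (q + 1))) ℝ,
      (∀ i j, H i j = 1 ∨ H i j = -1) ∧
      H * H.transpose =
        ((2 * (q + 1) : ℕ) : ℝ) • (1 : Matrix (Fin (2 * (q + 1))) (Fin (2 * (q + 1))) ℝ) := by
  classical
  obtain ⟨p, k, hp, hk, rfl⟩ := hq
  have : Fact p.Prime := ⟨hp⟩
  let F := GaloisField p k
  let _ : Fintype F := Fintype.ofFinite F
  have hcard : Fintype.card F = p ^ k := by
    rw [← Nat.card_eq_fintype_card, GaloisField.card p k hk.ne']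
  have hF : ringChar F ≠ 2 := fun h => by
    have := FiniteField.even_card_of_char_two h
    omega
  have hsq : IsSquare (-1 : F) := FiniteField.isSquare_neg_one_iff.mpr (by omega)
  let e : Option F × Fin 2 ≃ Fin (2 * (p ^ k + 1)) :=
    Fintype.equivFinOfCardEq (by simp [hcard, mul_comm])
  have hH := ((isConference_paleyConference (R := ℝ) hF).isHadamard_paleyDouble
    (paleyConference_transpose hsq)).reindex e e
  refine ⟨_, fun i j => Unitary.mem_iff_eq_one_or_eq_neg_one.mp (hH.apply_mem i j), ?_⟩
  simpa [conjTranspose_eq_transpose_of_trivial] using hH.mul_conjTranspose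
end

section
/- If in the Goethals–Seidel construction additionally A = S + I with S skew-symmetric circulant, then the resulting 4n×4n Hadamard matrix GS(A,B,C,D) is skew (equals I plus a skew-symmetric matrix). -/
/-- The 4×4 block matrix built from the 4×4 array of blocks `M`. -/
def blockMat4 {m : Type*} (M : Fin 4 → Fin 4 → Matrix m m ℝ) :
    Matrix (Fin 4 × m) (Fin 4 × m) ℝ :=
  Matrix.of fun p q => M p.1 q.1 p.2 q.2

/-- A matrix indexed by `ZMod n` is circulant. -/
def IsCirculant {n : ℕ} (A : Matrix (ZMod n) (ZMod n) ℝ) : Prop :=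
  ∀ k i j : ZMod n, A (i + k) (j + k) = A i j

/-- The anti-diagonal permutation (reversal) matrix on `ZMod n`. -/
def revMat (n : ℕ) : Matrix (ZMod n) (ZMod n) ℝ :=
  Matrix.of fun i j => if i + j + 1 = 0 then 1 else 0

/-- The Goethals–Seidel array of four matrices. -/
def GSarray {n : ℕ} [NeZero n] (A B C D : Matrix (ZMod n) (ZMod n) ℝ) :
    Matrix (Fin 4 × ZMod n) (Fin 4 × ZMod n) ℝ :=
  blockMat4
    ![![A, B * revMat n, C * revMat n, D * revMat n],
      ![-(B * revMat n), A, D.transpose * revMat n, -(C.transpose * revMat n)],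
      ![-(C * revMat n), -(D.transpose * revMat n), A, B.transpose * revMat n],
      ![-(D * revMat n), C.transpose * revMat n, -(B.transpose * revMat n), A]]

/-!
Each off-diagonal block of `H = GSarray A B C D` is `± X * revMat n` with `X` one of `B, C, D`
or their transposes, and its mirror block is the negative of the same matrix. A circulant matrix
times the reversal matrix is back-circulant, hence symmetric, so all off-diagonal blocks of
`H + Hᵀ` vanish, while the diagonal blocks are `A + Aᵀ = (S + 1) + (-S + 1) = 2`.
-/

open Matrix

theorem blockMat4_add_transpose {m : Type*} (M : Fin 4 → Fin 4 → Matrix m m ℝ) :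
    blockMat4 M + (blockMat4 M)ᵀ = blockMat4 fun p q => M p q + (M q p)ᵀ := by
  ext; rfl

theorem blockMat4_ite_smul_one {m : Type*} [DecidableEq m] (c : ℝ) :
    blockMat4 (fun p q => if p = q then c • (1 : Matrix m m ℝ) else 0) = c • 1 := by
  ext ⟨p, i⟩ ⟨q, j⟩
  by_cases hpq : p = q <;> simp [blockMat4, one_apply, hpq]

theorem IsCirculant.transpose {n : ℕ} {M : Matrix (ZMod n) (ZMod n) ℝ} (hM : IsCirculant M) :
    IsCirculant Mᵀ := fun k i j => hM k j i

theorem mul_revMat_apply {n : ℕ} [NeZero n] (M : Matrix (ZMod n) (ZMod n) ℝ) (i j : ZMod n) :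
    (M * revMat n) i j = M i (-j - 1) := by
  simp only [mul_apply, revMat, of_apply, mul_ite, mul_one, mul_zero, add_assoc,
    add_eq_zero_iff_eq_neg, Finset.sum_ite_eq', Finset.mem_univ, if_true, neg_add']

theorem IsCirculant.transpose_mul_revMat {n : ℕ} [NeZero n] {M : Matrix (ZMod n) (ZMod n) ℝ}
    (hM : IsCirculant M) : (M * revMat n)ᵀ = M * revMat n := by
  ext i j
  rw [transpose_apply, mul_revMat_apply, mul_revMat_apply]
  simpa [show j + (i - j) = i by ring, show -i - 1 + (i - j) = -j - 1 by ring]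
    using (hM (i - j) j (-i - 1)).symm

theorem add_transpose_eq_two_smul_one {ι : Type*} [DecidableEq ι] {A S : Matrix ι ι ℝ}
    (hA : A = S + 1) (hS : Sᵀ = -S) : A + Aᵀ = (2 : ℝ) • 1 := by
  rw [hA, transpose_add, hS, transpose_one]
  module

theorem goethals_seidel_skew_general (n : ℕ) [NeZero n]
    (A B C D S : Matrix (ZMod n) (ZMod n) ℝ)
    (hcirc : IsCirculant A ∧ IsCirculant B ∧ IsCirculant C ∧ IsCirculant D)
    (hA : A = S + 1) (hSskew : S.transpose = -S) :
    GSarray A B C D + (GSarray A B C D).transpose =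
      (2 : ℝ) • (1 : Matrix (Fin 4 × ZMod n) (Fin 4 × ZMod n) ℝ) := by
  obtain ⟨-, hB, hC, hD⟩ := hcirc
  have hA_add := add_transpose_eq_two_smul_one hA hSskew
  rw [GSarray, blockMat4_add_transpose, ← blockMat4_ite_smul_one]
  congr 1
  funext p q
  fin_cases p <;> fin_cases q <;>
    simp [-transpose_mul, hA_add, hB.transpose_mul_revMat, hC.transpose_mul_revMat,
      hD.transpose_mul_revMat, hB.transpose.transpose_mul_revMat,
      hC.transpose.transpose_mul_revMat, hD.transpose.transpose_mul_revMat]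

theorem goethals_seidel_skew (n : ℕ) [NeZero n]
    (A B C D S : Matrix (ZMod n) (ZMod n) ℝ)
    (hpm : ∀ M ∈ [A, B, C, D], ∀ i j, M i j = 1 ∨ M i j = -1)
    (hcirc : IsCirculant A ∧ IsCirculant B ∧ IsCirculant C ∧ IsCirculant D)
    (hsum : A * A.transpose + B * B.transpose + C * C.transpose + D * D.transpose =
      ((4 * n : ℕ) : ℝ) • (1 : Matrix (ZMod n) (ZMod n) ℝ))
    (hA : A = S + 1) (hSskew : S.transpose = -S) (hScirc : IsCirculant S) :
    GSarray A B C D + (GSarray A B C D).transpose =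
      (2 : ℝ) • (1 : Matrix (Fin 4 × ZMod n) (Fin 4 × ZMod n) ℝ) :=
  goethals_seidel_skew_general n A B C D S hcirc hA hSskew
end
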